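/- arXiv:1904.08802 — 3 statements merged into one kernel-verified Lean document; each statement's English description precedes it below -/
import Mathlib

section
/- Let Σ be a varietor on a cocomplete, cowellpowered category C with an (E,M)-factorisation system in which E consists of epimorphisms. Then Σ admits minimisation of reachable automata (i.e., every reachable Σ-tree automaton has a minimisation) if and only if for every language L : Σ◇I → O there exists a minimal Σ-tree automaton accepting L. Moreover, in that case, if A is a reachable Σ-tree automaton, then the minimisation of A is a minimal automaton. -/
/-!
The reachable automata accepting a language `L` are exactly the quotient automata of the free
automaton `freeAut L` on `Σ◇I`, the quotient map being the reachability map. Hence a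
minimisation of `freeAut L` is a minimal automaton accepting `L`. Conversely, if `Mi` is minimal
and `A` is reachable with the same language, the unique homomorphism `A → Mi` lies in `E` (by
right cancellation in `E = M.llp`) and exhibits `Mi` as the minimisation of `A`. Since
minimisations are unique up to isomorphism, every minimisation of a reachable automaton is
then isomorphic to a minimal one, hence minimal.
-/

open CategoryTheory CategoryTheory.Limits

universe v u

namespace TreeAutPaper

variable {C : Type u} [Category.{v} C]

/-- A representative of a quotient of `X` lying in the class `E`:
an epimorphism out of `X` belonging to `E`. -/
structure EQuot (E : MorphismProperty C) (X : C) where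
  obj : C
  hom : X ⟶ obj
  epi : Epi hom
  mem : E hom

/-- The order on quotients: `q ≤ r` iff `r = h ∘ q` for some `h`. -/
def EQuot.le {E : MorphismProperty C} {X : C} (q r : EQuot E X) : Prop :=
  ∃ h : q.obj ⟶ r.obj, q.hom ≫ h = r.hom

/-- Two quotient representatives are equivalent when each is below the other. -/
def EQuot.equiv {E : MorphismProperty C} {X : C} (q r : EQuot E X) : Prop :=
  q.le r ∧ r.le q

/-- `C` is cowellpowered: quotients (epimorphisms out of an object, up to equivalence)
of every object form a set (an essentially `v`-small collection). -/
def Cowellpowered (C : Type u) [Category.{v} C] : Prop :=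
  ∀ X : C, Small.{v} (Quot (fun q r : EQuot (⊤ : MorphismProperty C) X => EQuot.equiv q r))

/-- An `(E,M)`-factorisation system: both classes are closed under composition with
isomorphisms, every morphism factors as an `E`-morphism followed by an `M`-morphism, and
we have a unique diagonal fill-in property. -/
structure IsFactorizationSystem (E M : MorphismProperty C) : Prop where
  respectsIso_E : E.RespectsIso
  respectsIso_M : M.RespectsIso
  factor : ∀ {X Y : C} (f : X ⟶ Y), ∃ (Z : C) (e : X ⟶ Z) (m : Z ⟶ Y), E e ∧ M m ∧ e ≫ m = f
  diag : ∀ {A B X Y : C} (e : A ⟶ B) (m : X ⟶ Y) (f : A ⟶ X) (g : B ⟶ Y),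
    E e → M m → f ≫ m = e ≫ g → ∃! d : B ⟶ X, e ≫ d = f ∧ d ≫ m = g

/-- `S` preserves `E`-cointersections, i.e. wide pushouts of families of epimorphisms
lying in `E`. -/
def PreservesECointersections (E : MorphismProperty C) (S : C ⥤ C) : Prop :=
  ∀ (J : Type (max u v)) (X : C) (objs : J → C) (arrows : ∀ j : J, X ⟶ objs j),
    (∀ j, E (arrows j)) → (∀ j, Epi (arrows j)) →
    ∀ c : Cocone (WidePushoutShape.wideSpan X objs arrows),
      Nonempty (IsColimit c) → Nonempty (IsColimit (S.mapCocone c))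

/-- `f : ΣX ⟶ Y` factors through (the image under `Σ` of) the quotient `q`. -/
def FactorsThru {E : MorphismProperty C} (S : C ⥤ C) {X Y : C} (f : S.obj X ⟶ Y)
    (q : EQuot E X) : Prop :=
  ∃ g : S.obj q.obj ⟶ Y, S.map q.hom ≫ g = f

/-- `q` is the `E`-cobase of `f : ΣX ⟶ Y`: the greatest quotient of `X` in `E`
through whose `Σ`-image `f` factors. -/
def IsCobase (E : MorphismProperty C) (S : C ⥤ C) {X Y : C} (f : S.obj X ⟶ Y)
    (q : EQuot E X) : Prop :=
  FactorsThru S f q ∧ ∀ r : EQuot E X, FactorsThru S f r → r.le q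

variable (Sg : C ⥤ C)

/-- A `Σ`-tree automaton over input object `I` and output object `O`. -/
structure TreeAut (I O : C) where
  Q : Endofunctor.Algebra Sg
  i : I ⟶ Q.a
  o : Q.a ⟶ O

variable {Sg} {I O : C}

/-- `h` is a homomorphism of automata from `A` to `B`. -/
structure IsAutHom (A B : TreeAut Sg I O) (h : A.Q.a ⟶ B.Q.a) : Prop where
  alg : Sg.map h ≫ B.Q.str = A.Q.str ≫ h
  hi : A.i ≫ h = B.i
  ho : h ≫ B.o = A.o

/-- `(B, q)` is a quotient automaton of `A`: `q` is an epimorphism lying in `E`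
which is a homomorphism of automata. -/
structure IsQuotAut (E : MorphismProperty C) (A B : TreeAut Sg I O)
    (q : A.Q.a ⟶ B.Q.a) : Prop where
  isHom : IsAutHom A B q
  epi : Epi q
  mem : E q

/-- `(M, qm)` is the minimisation of `A`: a quotient automaton through which every
quotient automaton of `A` factors by a (necessarily unique) automaton homomorphism. -/
def IsMinimisation (E : MorphismProperty C) (A M : TreeAut Sg I O)
    (qm : A.Q.a ⟶ M.Q.a) : Prop :=
  IsQuotAut E A M qm ∧
    ∀ (B : TreeAut Sg I O) (q' : A.Q.a ⟶ B.Q.a), IsQuotAut E A B q' →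
      ∃! h : B.Q.a ⟶ M.Q.a, IsAutHom B M h ∧ q' ≫ h = qm

/-- `A` is simple: every quotient automaton of `A` has its quotient map an isomorphism. -/
def IsSimple (E : MorphismProperty C) (A : TreeAut Sg I O) : Prop :=
  ∀ (B : TreeAut Sg I O) (q : A.Q.a ⟶ B.Q.a), IsQuotAut E A B q → IsIso q

section Varietor

variable (Fr : C ⥤ Endofunctor.Algebra Sg) (adj : Fr ⊣ Endofunctor.Algebra.forget Sg)

/-- The reachability map of an automaton: the underlying morphism of the adjoint
transpose of the initial-state assignment. -/
def rch (A : TreeAut Sg I O) : (Fr.obj I).a ⟶ A.Q.a :=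
  ((adj.homEquiv I A.Q).symm A.i).f

/-- The language of an automaton. -/
def lang (A : TreeAut Sg I O) : (Fr.obj I).a ⟶ O :=
  rch Fr adj A ≫ A.o

/-- The automaton `(Σ◇I, α_I, η_I, L)` on the free `Σ`-algebra over `I`. -/
def freeAut (L : (Fr.obj I).a ⟶ O) : TreeAut Sg I O :=
  { Q := Fr.obj I
    i := adj.unit.app I
    o := L }

/-- `A` is reachable: its reachability map lies in `E`. -/
def Reachable (E : MorphismProperty C) (A : TreeAut Sg I O) : Prop :=
  E (rch Fr adj A)

/-- `A` is minimal: reachable, and every reachable automaton with the same language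
admits a (necessarily unique) automaton homomorphism into `A`. -/
def Minimal (E : MorphismProperty C) (A : TreeAut Sg I O) : Prop :=
  Reachable Fr adj E A ∧
    ∀ B : TreeAut Sg I O, Reachable Fr adj E B → lang Fr adj B = lang Fr adj A →
      ∃! h : B.Q.a ⟶ A.Q.a, IsAutHom B A h

end Varietor

namespace IsFactorizationSystem

variable {E M : MorphismProperty C}

lemma le_llp (hfs : IsFactorizationSystem E M) : E ≤ M.llp := fun _ _ e he _ _ m hm =>
  ⟨fun {f g} sq =>
    let ⟨d, ⟨hd₁, hd₂⟩, _⟩ := hfs.diag e m f g he hm sq.w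
    ⟨⟨⟨d, hd₁, hd₂⟩⟩⟩⟩

lemma llp_eq (hfs : IsFactorizationSystem E M) (hE : ∀ ⦃X Y : C⦄ (f : X ⟶ Y), E f → Epi f) :
    M.llp = E := by
  refine le_antisymm (fun Y Z g hg => ?_) hfs.le_llp
  obtain ⟨W, e, m, he, hm, rfl⟩ := hfs.factor g
  have := hg m hm
  have sq : CommSq e (e ≫ m) m (𝟙 Z) := ⟨by simp⟩
  -- The lift splits `m`, and `e` being epic makes the splitting two-sided.
  have hml : m ≫ sq.lift = 𝟙 W :=
    (hE e he).left_cancellation _ _ (by rw [Category.comp_id, ← Category.assoc, sq.fac_left])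
  have : IsIso m := ⟨sq.lift, hml, sq.fac_right⟩
  have := hfs.respectsIso_E
  exact MorphismProperty.RespectsIso.postcomp E m e he

lemma isMultiplicative (hfs : IsFactorizationSystem E M)
    (hE : ∀ ⦃X Y : C⦄ (f : X ⟶ Y), E f → Epi f) : E.IsMultiplicative := by
  rw [← hfs.llp_eq hE]
  infer_instance

lemma mem_of_isIso (hfs : IsFactorizationSystem E M)
    (hE : ∀ ⦃X Y : C⦄ (f : X ⟶ Y), E f → Epi f) {X Y : C} (f : X ⟶ Y) [IsIso f] : E f := by
  rw [← hfs.llp_eq hE]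
  exact M.llp_of_isIso f

lemma mem_of_comp_mem (hfs : IsFactorizationSystem E M)
    (hE : ∀ ⦃X Y : C⦄ (f : X ⟶ Y), E f → Epi f) {X Y Z : C} {f : X ⟶ Y} {g : Y ⟶ Z}
    (hf : E f) (hfg : E (f ≫ g)) : E g := by
  rw [← hfs.llp_eq hE]
  intro _ _ m hm
  refine ⟨fun {u k} sq => ?_⟩
  have := hfs.le_llp _ hfg m hm
  have sq' : CommSq (f ≫ u) (f ≫ g) m k := ⟨by rw [Category.assoc, sq.w, Category.assoc]⟩
  have hgl : g ≫ sq'.lift = u :=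
    (hE f hf).left_cancellation _ _ (by rw [← Category.assoc, sq'.fac_left])
  exact ⟨⟨⟨sq'.lift, hgl, sq'.fac_right⟩⟩⟩

end IsFactorizationSystem

namespace IsAutHom

lemma id (A : TreeAut Sg I O) : IsAutHom A A (𝟙 _) :=
  ⟨by simp, by simp, by simp⟩

lemma comp {A B D : TreeAut Sg I O} {h : A.Q.a ⟶ B.Q.a} {k : B.Q.a ⟶ D.Q.a}
    (hh : IsAutHom A B h) (hk : IsAutHom B D k) : IsAutHom A D (h ≫ k) where
  alg := by rw [Sg.map_comp, Category.assoc, hk.alg, ← Category.assoc, hh.alg, Category.assoc]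
  hi := by rw [← Category.assoc, hh.hi, hk.hi]
  ho := by rw [Category.assoc, hk.ho, hh.ho]

end IsAutHom

section Varietor

variable (Fr : C ⥤ Endofunctor.Algebra Sg) (adj : Fr ⊣ Endofunctor.Algebra.forget Sg)

lemma eq_rch_iff (A : TreeAut Sg I O) (h : (Fr.obj I).a ⟶ A.Q.a) :
    h = rch Fr adj A ↔
      Sg.map h ≫ A.Q.str = (Fr.obj I).str ≫ h ∧ adj.unit.app I ≫ h = A.i := by
  constructor
  · rintro rfl
    refine ⟨((adj.homEquiv I A.Q).symm A.i).h, ?_⟩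
    have := (adj.homEquiv I A.Q).apply_symm_apply A.i
    rwa [Adjunction.homEquiv_unit] at this
  · rintro ⟨halg, hi⟩
    have : adj.homEquiv I A.Q ⟨h, halg⟩ = A.i := by rwa [Adjunction.homEquiv_unit]
    exact congrArg Endofunctor.Algebra.Hom.f ((Equiv.eq_symm_apply _).mpr this)

lemma isAutHom_freeAut_iff {L : (Fr.obj I).a ⟶ O} {A : TreeAut Sg I O}
    {h : (Fr.obj I).a ⟶ A.Q.a} :
    IsAutHom (freeAut Fr adj L) A h ↔ h = rch Fr adj A ∧ lang Fr adj A = L := by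
  constructor
  · intro hh
    obtain rfl := (eq_rch_iff Fr adj A h).mpr ⟨hh.alg, hh.hi⟩
    exact ⟨rfl, hh.ho⟩
  · rintro ⟨rfl, rfl⟩
    obtain ⟨halg, hi⟩ := (eq_rch_iff Fr adj A _).mp rfl
    exact ⟨halg, hi, rfl⟩

lemma isAutHom_rch (A : TreeAut Sg I O) :
    IsAutHom (freeAut Fr adj (lang Fr adj A)) A (rch Fr adj A) :=
  (isAutHom_freeAut_iff Fr adj).mpr ⟨rfl, rfl⟩

lemma IsAutHom.rch_comp {A B : TreeAut Sg I O} {h : A.Q.a ⟶ B.Q.a} (hh : IsAutHom A B h) :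
    rch Fr adj A ≫ h = rch Fr adj B :=
  ((isAutHom_freeAut_iff Fr adj).mp ((isAutHom_rch Fr adj A).comp hh)).1

lemma IsAutHom.lang_eq {A B : TreeAut Sg I O} {h : A.Q.a ⟶ B.Q.a} (hh : IsAutHom A B h) :
    lang Fr adj B = lang Fr adj A :=
  ((isAutHom_freeAut_iff Fr adj).mp ((isAutHom_rch Fr adj A).comp hh)).2

variable {E M : MorphismProperty C}

lemma reachable_freeAut (hfs : IsFactorizationSystem E M)
    (hE : ∀ ⦃X Y : C⦄ (f : X ⟶ Y), E f → Epi f) (L : (Fr.obj I).a ⟶ O) :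
    Reachable Fr adj E (freeAut Fr adj L) := by
  have hrch := ((isAutHom_freeAut_iff Fr adj).mp (IsAutHom.id (freeAut Fr adj L))).1
  rw [Reachable, ← hrch]
  exact hfs.mem_of_isIso hE (𝟙 (Fr.obj I).a)

lemma IsQuotAut.reachable (hfs : IsFactorizationSystem E M)
    (hE : ∀ ⦃X Y : C⦄ (f : X ⟶ Y), E f → Epi f) {A B : TreeAut Sg I O} {q : A.Q.a ⟶ B.Q.a}
    (hq : IsQuotAut E A B q) (hA : Reachable Fr adj E A) : Reachable Fr adj E B := by
  have := hfs.isMultiplicative hE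
  rw [Reachable, ← hq.isHom.rch_comp Fr adj]
  exact E.comp_mem _ _ hA hq.mem

lemma IsMinimisation.minimal_of_freeAut (hE : ∀ ⦃X Y : C⦄ (f : X ⟶ Y), E f → Epi f)
    {L : (Fr.obj I).a ⟶ O} {N : TreeAut Sg I O} {q : (Fr.obj I).a ⟶ N.Q.a}
    (hN : IsMinimisation E (freeAut Fr adj L) N q) :
    Minimal Fr adj E N ∧ lang Fr adj N = L := by
  obtain ⟨rfl, hL⟩ := (isAutHom_freeAut_iff Fr adj).mp hN.1.isHom
  refine ⟨⟨hN.1.mem, fun B hB hBL => ?_⟩, hL⟩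
  have hquot : IsQuotAut E (freeAut Fr adj L) B (rch Fr adj B) :=
    ⟨(isAutHom_freeAut_iff Fr adj).mpr ⟨rfl, hBL.trans hL⟩, hE _ hB, hB⟩
  obtain ⟨h, ⟨hh, -⟩, huniq⟩ := hN.2 B _ hquot
  exact ⟨h, hh, fun k hk => huniq k ⟨hk, hk.rch_comp Fr adj⟩⟩

lemma Minimal.isMinimisation (hfs : IsFactorizationSystem E M)
    (hE : ∀ ⦃X Y : C⦄ (f : X ⟶ Y), E f → Epi f) {A Mi : TreeAut Sg I O} {q : A.Q.a ⟶ Mi.Q.a}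
    (hMi : Minimal Fr adj E Mi) (hA : Reachable Fr adj E A) (hq : IsAutHom A Mi q) :
    IsMinimisation E A Mi q := by
  have hqE : E q := hfs.mem_of_comp_mem hE hA (by rw [hq.rch_comp Fr adj]; exact hMi.1)
  refine ⟨⟨hq, hE q hqE, hqE⟩, fun B q' hq' => ?_⟩
  have hBL : lang Fr adj B = lang Fr adj Mi := by
    rw [hq'.isHom.lang_eq Fr adj, hq.lang_eq Fr adj]
  obtain ⟨h, hh, huniq⟩ := hMi.2 B (IsQuotAut.reachable Fr adj hfs hE hq' hA) hBL
  refine ⟨h, ⟨hh, ?_⟩, fun k hk => huniq k hk.1⟩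
  exact (hMi.2 A hA (hq.lang_eq Fr adj).symm).unique (hq'.isHom.comp hh) hq

lemma Minimal.of_iso (hfs : IsFactorizationSystem E M)
    (hE : ∀ ⦃X Y : C⦄ (f : X ⟶ Y), E f → Epi f) {N Q : TreeAut Sg I O}
    (hN : Minimal Fr adj E N) (e : Q.Q.a ≅ N.Q.a) (he : IsAutHom Q N e.hom)
    (he' : IsAutHom N Q e.inv) : Minimal Fr adj E Q := by
  have := hfs.isMultiplicative hE
  refine ⟨?_, fun B hB hBL => ?_⟩
  · rw [Reachable, ← he'.rch_comp Fr adj]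
    exact E.comp_mem _ _ hN.1 (hfs.mem_of_isIso hE _)
  obtain ⟨g, hg, huniq⟩ := hN.2 B hB (hBL.trans (he.lang_eq Fr adj).symm)
  exact ⟨g ≫ e.inv, hg.comp he', fun k hk => by
    rw [Iso.eq_comp_inv]; exact huniq _ (hk.comp he)⟩

lemma exists_minimal_of_forall_minimisation (hfs : IsFactorizationSystem E M)
    (hE : ∀ ⦃X Y : C⦄ (f : X ⟶ Y), E f → Epi f)
    (Hmin : ∀ A : TreeAut Sg I O, Reachable Fr adj E A →
      ∃ (Qm : TreeAut Sg I O) (qm : A.Q.a ⟶ Qm.Q.a), IsMinimisation E A Qm qm)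
    (L : (Fr.obj I).a ⟶ O) : ∃ A : TreeAut Sg I O, Minimal Fr adj E A ∧ lang Fr adj A = L :=
  let ⟨N, _, hN⟩ := Hmin _ (reachable_freeAut Fr adj hfs hE L)
  ⟨N, hN.minimal_of_freeAut Fr adj hE⟩

end Varietor

lemma IsMinimisation.exists_iso {E : MorphismProperty C} {A Q N : TreeAut Sg I O}
    {q : A.Q.a ⟶ Q.Q.a} {n : A.Q.a ⟶ N.Q.a}
    (hQ : IsMinimisation E A Q q) (hN : IsMinimisation E A N n) :
    ∃ e : Q.Q.a ≅ N.Q.a, IsAutHom Q N e.hom ∧ IsAutHom N Q e.inv := by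
  obtain ⟨f, ⟨hf, hqf⟩, -⟩ := hN.2 Q q hQ.1
  obtain ⟨g, ⟨hg, hng⟩, -⟩ := hQ.2 N n hN.1
  have hfg : f ≫ g = 𝟙 _ := (hQ.2 Q q hQ.1).unique
    ⟨hf.comp hg, by rw [← Category.assoc, hqf, hng]⟩ ⟨IsAutHom.id Q, Category.comp_id q⟩
  have hgf : g ≫ f = 𝟙 _ := (hN.2 N n hN.1).unique
    ⟨hg.comp hf, by rw [← Category.assoc, hng, hqf]⟩ ⟨IsAutHom.id N, Category.comp_id n⟩
  exact ⟨⟨f, g, hfg, hgf⟩, hf, hg⟩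

theorem admitsMinimisation_iff_minimal_exists_general
    {C : Type u} [Category.{v} C]
    (E M : MorphismProperty C) (hfs : IsFactorizationSystem E M)
    (hE : ∀ ⦃X Y : C⦄ (f : X ⟶ Y), E f → Epi f)
    {Sg : C ⥤ C} (Fr : C ⥤ Endofunctor.Algebra Sg)
    (adj : Fr ⊣ Endofunctor.Algebra.forget Sg)
    (I O : C) :
    ((∀ A : TreeAut Sg I O, Reachable Fr adj E A →
        ∃ (Qm : TreeAut Sg I O) (qm : A.Q.a ⟶ Qm.Q.a), IsMinimisation E A Qm qm) ↔
      (∀ L : (Fr.obj I).a ⟶ O,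
        ∃ A : TreeAut Sg I O, Minimal Fr adj E A ∧ lang Fr adj A = L)) ∧
    ((∀ A : TreeAut Sg I O, Reachable Fr adj E A →
        ∃ (Qm : TreeAut Sg I O) (qm : A.Q.a ⟶ Qm.Q.a), IsMinimisation E A Qm qm) →
      ∀ (A : TreeAut Sg I O), Reachable Fr adj E A →
        ∀ (Qm : TreeAut Sg I O) (qm : A.Q.a ⟶ Qm.Q.a),
          IsMinimisation E A Qm qm → Minimal Fr adj E Qm) := by
  refine ⟨⟨exists_minimal_of_forall_minimisation Fr adj hfs hE, fun Hex A hA => ?_⟩,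
    fun Hmin A hA Qm qm hQm => ?_⟩
  · obtain ⟨Mi, hMi, hL⟩ := Hex (lang Fr adj A)
    obtain ⟨q, hq, -⟩ := hMi.2 A hA hL.symm
    exact ⟨Mi, q, Minimal.isMinimisation Fr adj hfs hE hMi hA hq⟩
  · obtain ⟨N, hN, hL⟩ :=
      exists_minimal_of_forall_minimisation Fr adj hfs hE Hmin (lang Fr adj A)
    obtain ⟨q, hq, -⟩ := hN.2 A hA hL.symm
    obtain ⟨e, he, he'⟩ := hQm.exists_iso (Minimal.isMinimisation Fr adj hfs hE hN hA hq)
    exact Minimal.of_iso Fr adj hfs hE hN e he he'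

/-- Σ admits minimisation of reachable automata iff every language
over Σ is accepted by some minimal automaton; and in that case the minimisation of a
reachable automaton is itself minimal. -/
theorem admitsMinimisation_iff_minimal_exists
    {C : Type u} [Category.{v} C] [HasColimits C] (hcwp : Cowellpowered C)
    (E M : MorphismProperty C) (hfs : IsFactorizationSystem E M)
    (hE : ∀ ⦃X Y : C⦄ (f : X ⟶ Y), E f → Epi f)
    {Sg : C ⥤ C} (Fr : C ⥤ Endofunctor.Algebra Sg)
    (adj : Fr ⊣ Endofunctor.Algebra.forget Sg)
    (I O : C) :
    ((∀ A : TreeAut Sg I O, Reachable Fr adj E A →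
        ∃ (Qm : TreeAut Sg I O) (qm : A.Q.a ⟶ Qm.Q.a), IsMinimisation E A Qm qm) ↔
      (∀ L : (Fr.obj I).a ⟶ O,
        ∃ A : TreeAut Sg I O, Minimal Fr adj E A ∧ lang Fr adj A = L)) ∧
    ((∀ A : TreeAut Sg I O, Reachable Fr adj E A →
        ∃ (Qm : TreeAut Sg I O) (qm : A.Q.a ⟶ Qm.Q.a), IsMinimisation E A Qm qm) →
      ∀ (A : TreeAut Sg I O), Reachable Fr adj E A →
        ∀ (Qm : TreeAut Sg I O) (qm : A.Q.a ⟶ Qm.Q.a),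
          IsMinimisation E A Qm qm → Minimal Fr adj E Qm) :=
  admitsMinimisation_iff_minimal_exists_general E M hfs hE Fr adj I O

end TreeAutPaper
end

section
/- Let C be cocomplete and cowellpowered with an (E,M)-factorisation system in which E consists of epimorphisms, and suppose Σ : C → C preserves E-cointersections. Let (Q,δ,i,o) be a Σ-tree automaton such that o ∈ Quot_E(Q). Then the greatest fixed point of the monotone operator Θ_δ ∧ o on the complete lattice Quot_E(Q) (where ∧ is the pointwise meet with the constant o) is the minimisation of (Q,δ,i,o). -/
open CategoryTheory CategoryTheory.Limits

universe v u

namespace TreeAutPaper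

variable {C : Type u} [Category.{v} C]

variable (Sg : C ⥤ C)

variable {Sg} {I O : C}

/-!
The cobase of `f : ΣX ⟶ Y` exists: by cowellpoweredness the `E`-quotients of `X` through
which `f` factors form an essentially small family, their cointersection lies in `E`, and
`f` factors through it since `Σ` preserves it. So `qm ≤ Θ_δ(qm)` says that `δ` descends
along `qm`, and `qm ≤ o` that `o` does, making `qm` a quotient automaton. Conversely every
quotient automaton `q'` satisfies `q' ≤ Θ_δ(q')` and `q' ≤ o`, hence `q' ≤ qm`; the
comparison map is a homomorphism because `q'` and `Σq'` are epimorphisms.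
-/

namespace EQuot

variable {E : MorphismProperty C} {X : C}

lemma le_refl (q : EQuot E X) : q.le q :=
  ⟨𝟙 _, Category.comp_id _⟩

lemma le_trans {q r s : EQuot E X} (hqr : q.le r) (hrs : r.le s) : q.le s := by
  obtain ⟨a, ha⟩ := hqr
  obtain ⟨b, hb⟩ := hrs
  exact ⟨a ≫ b, by rw [← Category.assoc, ha, hb]⟩

lemma equivalence_equiv (E : MorphismProperty C) (X : C) :
    Equivalence (fun q r : EQuot E X => q.equiv r) where
  refl q := ⟨q.le_refl, q.le_refl⟩
  symm h := ⟨h.2, h.1⟩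
  trans h₁ h₂ := ⟨le_trans h₁.1 h₂.1, le_trans h₂.2 h₁.2⟩

def toTop (q : EQuot E X) : EQuot (⊤ : MorphismProperty C) X :=
  ⟨q.obj, q.hom, q.epi, trivial⟩

end EQuot

lemma Cowellpowered.exists_small_family (hcwp : Cowellpowered C) {E : MorphismProperty C}
    {X : C} (P : EQuot E X → Prop) :
    ∃ (J : Type (max u v)) (_ : Small.{v} J) (r : J → EQuot E X),
      (∀ j, P (r j)) ∧ ∀ q, P q → ∃ j, q.le (r j) := by
  have := hcwp X
  let R := fun q r : EQuot (⊤ : MorphismProperty C) X => q.equiv r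
  let J := {c : Quot R // ∃ q : EQuot E X, P q ∧ Quot.mk R q.toTop = c}
  refine ⟨J, inferInstance, fun c => c.2.choose, fun c => c.2.choose_spec.1, fun q hq => ?_⟩
  let c : J := ⟨Quot.mk R q.toTop, q, hq, rfl⟩
  have hequiv : R c.2.choose.toTop q.toTop :=
    (EQuot.equivalence_equiv _ X).eqvGen_iff.mp (Quot.eqvGen_exact c.2.choose_spec.2)
  exact ⟨c, hequiv.2⟩

lemma hasColimitsOfShape_widePushoutShape_of_small [HasColimits C] (J : Type*) [Small.{v} J] :
    HasColimitsOfShape (WidePushoutShape J) C :=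
  hasColimitsOfShape_of_equivalence (WidePushoutShape.equivalenceOfEquiv J (equivShrink J).symm)

section Cointersection

variable {J : Type*} {F : WidePushoutShape J ⥤ C} {c : Cocone F}

lemma epi_ι_none_of_isColimit [∀ j, Epi (F.map (WidePushoutShape.Hom.init j))]
    (hc : IsColimit c) : Epi (c.ι.app none) := by
  refine ⟨fun {Z} u v huv => hc.hom_ext fun j => ?_⟩
  cases j with
  | none => exact huv
  | some j =>
    exact (cancel_epi (F.map (WidePushoutShape.Hom.init j))).1
      ((c.w_assoc _ u).trans (huv.trans (c.w_assoc _ v).symm))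

/-- The diagonal fill-ins against the `M`-part of the factorisation of `c.ι.app none`
induce an inverse of that `M`-part. -/
lemma IsFactorizationSystem.mem_ι_none_of_isColimit {E M : MorphismProperty C}
    (hfs : IsFactorizationSystem E M) (hE : ∀ ⦃X Y : C⦄ (f : X ⟶ Y), E f → Epi f)
    (harrows : ∀ j, E (F.map (WidePushoutShape.Hom.init j))) (hc : IsColimit c) :
    E (c.ι.app none) := by
  obtain ⟨Z, e, m, he, hm, hem⟩ := hfs.factor (X := F.obj none) (Y := c.pt) (c.ι.app none)
  have hfill : ∀ j, ∃ d, F.map (WidePushoutShape.Hom.init j) ≫ d = e ∧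
      d ≫ m = c.ι.app (some j) := fun j =>
    (hfs.diag _ m e _ (harrows j) hm (by rw [hem, c.w])).exists
  choose d hd₁ hd₂ using hfill
  let u : c.pt ⟶ Z := hc.desc (WidePushoutShape.mkCocone e d hd₁)
  have hu_none : c.ι.app none ≫ u = e := hc.fac _ none
  have hu_some : ∀ j, c.ι.app (some j) ≫ u = d j := fun j => hc.fac _ (some j)
  have hum : u ≫ m = 𝟙 c.pt := hc.hom_ext fun j => by
    cases j with
    | none => rw [← Category.assoc, hu_none, hem, Category.comp_id]
    | some j => rw [← Category.assoc, hu_some, hd₂, Category.comp_id]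
  have hmu : m ≫ u = 𝟙 Z := by
    have := hE e he
    exact (cancel_epi e).1 (by rw [← Category.assoc, hem, hu_none, Category.comp_id])
  have : IsIso m := ⟨u, hmu, hum⟩
  have := hfs.respectsIso_E
  rw [← hem]
  exact MorphismProperty.RespectsIso.postcomp E m e he

end Cointersection

def isColimitWideSpanConst {J : Type*} (j₀ : J) {X Y : C} (e : X ⟶ Y) [Epi e] :
    IsColimit (WidePushoutShape.mkCocone (F := WidePushoutShape.wideSpan X (fun _ : J => Y)
      (fun _ => e)) e (fun _ => 𝟙 Y) (fun _ => Category.comp_id e)) where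
  desc s := s.ι.app (some j₀)
  fac s j := by
    cases j with
    | none => exact s.w (WidePushoutShape.Hom.init j₀)
    | some j =>
      refine (Category.id_comp _).trans ((cancel_epi e).1 ?_)
      exact (s.w (WidePushoutShape.Hom.init j₀)).trans (s.w (WidePushoutShape.Hom.init j)).symm
  uniq s m hm := (Category.id_comp m).symm.trans (hm (some j₀))

/-- `Σ` preserves the cointersection of two copies of `e`, whose legs are identities. -/
lemma PreservesECointersections.epi_map {E : MorphismProperty C}
    (hpres : PreservesECointersections E Sg) {X Y : C} (e : X ⟶ Y) [Epi e] (he : E e) :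
    Epi (Sg.map e) := by
  let J : Type (max u v) := ULift Bool
  obtain ⟨hmap⟩ := hpres J X (fun _ => Y) (fun _ => e) (fun _ => he) (fun _ => inferInstance) _
    ⟨isColimitWideSpanConst (⟨true⟩ : J) e⟩
  refine ⟨fun {Z} u v huv => ?_⟩
  let s : Cocone (WidePushoutShape.wideSpan X (fun _ : J => Y) (fun _ => e) ⋙ Sg) :=
    WidePushoutShape.mkCocone (Sg.map e ≫ u) (fun j => cond j.down u v)
      (fun j => by cases j with | up b => cases b; exacts [huv.symm, rfl])
  have hu : Sg.map (𝟙 Y) ≫ hmap.desc s = u := hmap.fac s (some ⟨true⟩)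
  have hv : Sg.map (𝟙 Y) ≫ hmap.desc s = v := hmap.fac s (some ⟨false⟩)
  rw [← hu, ← hv]

lemma FactorsThru.of_le {E : MorphismProperty C} {X Y : C} {f : Sg.obj X ⟶ Y}
    {q t : EQuot E X} (ht : FactorsThru Sg f t) (hqt : q.le t) : FactorsThru Sg f q := by
  obtain ⟨g, hg⟩ := ht
  obtain ⟨h, hh⟩ := hqt
  exact ⟨Sg.map h ≫ g, by rw [← Sg.map_comp_assoc, hh, hg]⟩

theorem exists_isCobase [HasColimits C] (hcwp : Cowellpowered C) {E M : MorphismProperty C}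
    (hfs : IsFactorizationSystem E M) (hE : ∀ ⦃X Y : C⦄ (f : X ⟶ Y), E f → Epi f)
    (hpres : PreservesECointersections E Sg) {X Y : C} (f : Sg.obj X ⟶ Y) :
    ∃ t : EQuot E X, IsCobase E Sg f t := by
  obtain ⟨J, _, r, hfac, hcover⟩ := hcwp.exists_small_family (E := E) (FactorsThru Sg f)
  have := hasColimitsOfShape_widePushoutShape_of_small (C := C) J
  let D := WidePushoutShape.wideSpan X (fun j => (r j).obj) (fun j => (r j).hom)
  have : ∀ j, Epi (D.map (WidePushoutShape.Hom.init j)) := fun j => (r j).epi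
  let t : EQuot E X := ⟨colimit D, colimit.ι D none,
    epi_ι_none_of_isColimit (colimit.isColimit D),
    hfs.mem_ι_none_of_isColimit hE (fun j => (r j).mem) (colimit.isColimit D)⟩
  have hle : ∀ j, (r j).le t := fun j =>
    ⟨colimit.ι D (some j), colimit.w D (WidePushoutShape.Hom.init j)⟩
  choose g hg using hfac
  obtain ⟨hmap⟩ := hpres J X _ _ (fun j => (r j).mem) (fun j => (r j).epi) (colimit.cocone D)
    ⟨colimit.isColimit D⟩
  refine ⟨t, ⟨hmap.desc (WidePushoutShape.mkCocone f g hg), hmap.fac _ none⟩, fun q hq => ?_⟩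
  obtain ⟨j, hj⟩ := hcover q hq
  exact EQuot.le_trans hj (hle j)

section QuotientAutomata

variable {E : MorphismProperty C} {A B N : TreeAut Sg I O} {q : A.Q.a ⟶ B.Q.a}

def IsQuotAut.toEQuot (hq : IsQuotAut E A B q) : EQuot E A.Q.a :=
  ⟨B.Q.a, q, hq.epi, hq.mem⟩

lemma IsQuotAut.isAutHom_of_fac (hq : IsQuotAut E A B q) [Epi (Sg.map q)]
    {p : A.Q.a ⟶ N.Q.a} (hp : IsAutHom A N p) {k : B.Q.a ⟶ N.Q.a} (hk : q ≫ k = p) :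
    IsAutHom B N k where
  alg := by
    rw [← cancel_epi (Sg.map q), ← Sg.map_comp_assoc, hk, hp.alg, ← hk,
      ← Category.assoc, ← hq.isHom.alg, Category.assoc]
  hi := by rw [← hq.isHom.hi, Category.assoc, hk, hp.hi]
  ho := by
    have := hq.epi
    rw [← cancel_epi q, ← Category.assoc, hk, hp.ho, hq.isHom.ho]

end QuotientAutomata

/-- **minimisation as a greatest fixed point.** Suppose `Σ` preserves
`E`-cointersections and let `(Q,δ,i,o)` be an automaton with `o ∈ Quot_E(Q)`. If `qm`
is the greatest fixed point of the monotone operator `Θ_δ ∧ o` on the complete lattice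
`Quot_E(Q)` — characterised, by Knaster–Tarski, as the greatest post-fixed point, i.e.
`qm ≤ Θ_δ(qm)`, `qm ≤ o`, and every `q'` with `q' ≤ Θ_δ(q')` and `q' ≤ o` satisfies
`q' ≤ qm` — then `qm` carries an automaton structure making it the minimisation of
`(Q,δ,i,o)`. -/
theorem gfp_is_minimisation
    {C : Type u} [Category.{v} C] [HasColimits C] (hcwp : Cowellpowered C)
    (E M : MorphismProperty C) (hfs : IsFactorizationSystem E M)
    (hE : ∀ ⦃X Y : C⦄ (f : X ⟶ Y), E f → Epi f)
    {Sg : C ⥤ C} (hpres : PreservesECointersections E Sg)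
    {I O : C} (A : TreeAut Sg I O) (hoEpi : Epi A.o) (hoE : E A.o)
    (qm : EQuot E A.Q.a)
    -- `qm ≤ Θ_δ(qm)` :
    (hpost₁ : ∀ t : EQuot E A.Q.a, IsCobase E Sg (A.Q.str ≫ qm.hom) t → qm.le t)
    -- `qm ≤ o` :
    (hpost₂ : qm.le ⟨O, A.o, hoEpi, hoE⟩)
    -- `qm` is the greatest such, hence the greatest fixed point of `Θ_δ ∧ o` :
    (hgreatest : ∀ q' : EQuot E A.Q.a,
      (∀ t : EQuot E A.Q.a, IsCobase E Sg (A.Q.str ≫ q'.hom) t → q'.le t) →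
      q'.le ⟨O, A.o, hoEpi, hoE⟩ → q'.le qm) :
    ∃ (δm : Sg.obj qm.obj ⟶ qm.obj) (om : qm.obj ⟶ O),
      IsMinimisation E A ⟨⟨qm.obj, δm⟩, A.i ≫ qm.hom, om⟩ qm.hom := by
  obtain ⟨δm, hδm⟩ : FactorsThru Sg (A.Q.str ≫ qm.hom) qm := by
    obtain ⟨t, ht⟩ := exists_isCobase hcwp hfs hE hpres (A.Q.str ≫ qm.hom)
    exact ht.1.of_le (hpost₁ t ht)
  obtain ⟨om, hqo⟩ := hpost₂
  have hqm : IsQuotAut E A ⟨⟨qm.obj, δm⟩, A.i ≫ qm.hom, om⟩ qm.hom :=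
    ⟨⟨hδm, rfl, hqo⟩, qm.epi, qm.mem⟩
  refine ⟨δm, om, hqm, fun B q hq => ?_⟩
  obtain ⟨k, hk⟩ := hgreatest hq.toEQuot (fun t ht => ht.2 _ ⟨B.Q.str, hq.isHom.alg⟩)
    ⟨B.o, hq.isHom.ho⟩
  have := hq.epi
  have := hpres.epi_map q hq.mem
  exact ⟨k, ⟨hq.isAutHom_of_fac hqm.isHom hk, hk⟩,
    fun k' hk' => (cancel_epi q).1 (hk'.2.trans hk.symm)⟩

end TreeAutPaper
end

section
/- Let (T,η,μ) be a monad on a category C that has kernel pairs and reflexive coequalisers, and suppose T preserves reflexive coequalisers. Then every language L : TI → O that is accepted by a minimal T-automaton has a Nerode equivalence; indeed, the kernel pair p₁, p₂ : K → TI of the reachability map of the minimal automaton is the Nerode equivalence of L. -/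
open CategoryTheory CategoryTheory.Limits

universe v u

namespace TreeAutPaper

variable {C : Type u} [Category.{v} C]

/-- The adjoint transpose `f♯ : FX ⟶ Y` of `f : X ⟶ UY` for the free–forgetful
adjunction of the Eilenberg–Moore category of a monad. -/
def transpose (T : Monad C) {X : C} {Y : T.Algebra} (f : X ⟶ Y.A) : T.free.obj X ⟶ Y :=
  ((Monad.adj T).homEquiv X Y).symm f

/-- `T` maps reflexive coequalisers to epimorphisms. -/
def MapsReflexiveCoequalizersToEpis (S : C ⥤ C) : Prop :=
  ∀ {A B X : C} (f g : A ⟶ B) (c : B ⟶ X) (w : f ≫ c = g ≫ c),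
    IsReflexivePair f g → Nonempty (IsColimit (Cofork.ofπ c w)) → Epi (S.map c)

/-- `S` preserves reflexive coequalisers. -/
def PreservesReflexiveCoequalizersProp (S : C ⥤ C) : Prop :=
  ∀ {A B X : C} (f g : A ⟶ B) (c : B ⟶ X) (w : f ≫ c = g ≫ c),
    IsReflexivePair f g → Nonempty (IsColimit (Cofork.ofπ c w)) →
      Nonempty (IsColimit (Cofork.ofπ (S.map c)
        (show S.map f ≫ S.map c = S.map g ≫ S.map c by
          rw [← S.map_comp, ← S.map_comp, w])))

/-- `(R, p₁, p₂)` is the Nerode equivalence of the language `L : TI ⟶ O`. -/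
def IsNerode (T : Monad C) {I O : C} (L : (T : C ⥤ C).obj I ⟶ O)
    (R : C) (p₁ p₂ : R ⟶ (T : C ⥤ C).obj I) : Prop :=
  ((T : C ⥤ C).map p₁ ≫ T.μ.app I ≫ L = (T : C ⥤ C).map p₂ ≫ T.μ.app I ≫ L) ∧
    ∀ (S : C) (q₁ q₂ : S ⟶ (T : C ⥤ C).obj I), IsReflexivePair q₁ q₂ →
      (T : C ⥤ C).map q₁ ≫ T.μ.app I ≫ L = (T : C ⥤ C).map q₂ ≫ T.μ.app I ≫ L →
      ∃! u : S ⟶ R, u ≫ p₁ = q₁ ∧ u ≫ p₂ = q₂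

variable (T : Monad C)

/-- A `T`-automaton: an Eilenberg–Moore algebra together with initial and final
state morphisms. -/
structure TAut (I O : C) where
  Q : T.Algebra
  i : I ⟶ Q.A
  o : Q.A ⟶ O

variable {T} {I O : C}

/-- The reachability map of a `T`-automaton. -/
def TAut.rch (A : TAut T I O) : (T : C ⥤ C).obj I ⟶ A.Q.A :=
  (transpose T A.i).f

/-- The language of a `T`-automaton. -/
def TAut.lang (A : TAut T I O) : (T : C ⥤ C).obj I ⟶ O :=
  A.rch ≫ A.o

/-- `h` is a homomorphism of `T`-automata from `A` to `B`. -/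
structure IsTAutHom (A B : TAut T I O) (h : A.Q.A ⟶ B.Q.A) : Prop where
  alg : (T : C ⥤ C).map h ≫ B.Q.a = A.Q.a ≫ h
  hi : A.i ≫ h = B.i
  ho : h ≫ B.o = A.o

/-- A `T`-automaton is reachable if its reachability map is a reflexive
regular epimorphism, i.e. a coequaliser of a reflexive pair. -/
def TAut.Reachable (A : TAut T I O) : Prop :=
  ∃ (S : C) (q₁ q₂ : S ⟶ (T : C ⥤ C).obj I),
    IsReflexivePair q₁ q₂ ∧
      ∃ w : q₁ ≫ A.rch = q₂ ≫ A.rch, Nonempty (IsColimit (Cofork.ofπ A.rch w))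

/-- A `T`-automaton is minimal if it is reachable and every reachable `T`-automaton
with the same language admits a (necessarily unique) homomorphism into it. -/
def TAut.Minimal (A : TAut T I O) : Prop :=
  A.Reachable ∧ ∀ B : TAut T I O, B.Reachable → B.lang = A.lang →
    ∃! h : B.Q.A ⟶ A.Q.A, IsTAutHom B A h

/-!
A reflexive pair `q₁, q₂ : S ⟶ TI` identified by the extended language `μ ≫ L` extends to a
reflexive pair of free algebra morphisms `TS ⇉ TI`. Because `T` preserves its coequaliser `c`
(and `T c`), `c` lifts to the Eilenberg–Moore category, and with initial state `η ≫ c` and output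
induced by `L` it is a reachable automaton accepting `L` with reachability map `c`. Minimality
yields a homomorphism from it into the minimal automaton, so the minimal reachability map factors
through `c` and therefore also identifies `q₁` and `q₂`; its kernel pair thus has the universal
property of the Nerode equivalence.
-/

section Transpose

variable {X : C} {Y : T.Algebra}

theorem transpose_f (f : X ⟶ Y.A) : (transpose T f).f = T.map f ≫ Y.a := by
  show T.map f ≫ T.map (𝟙 Y.A) ≫ Y.a = _
  rw [T.map_id, Category.id_comp]

theorem transpose_free_f {I : C} (q : X ⟶ T.obj I) :
    (transpose T (Y := T.free.obj I) q).f = T.map q ≫ T.μ.app I :=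
  transpose_f (Y := T.free.obj I) q

theorem unit_comp_transpose_f (f : X ⟶ Y.A) : T.η.app X ≫ (transpose T f).f = f := by
  rw [transpose_f, ← T.η.naturality_assoc, Functor.id_map, Y.unit]
  exact Category.comp_id f

theorem transpose_unit_comp (h : T.free.obj X ⟶ Y) : transpose T (T.η.app X ≫ h.f) = h := by
  have := ((Monad.adj T).homEquiv X Y).symm_apply_apply h
  simp only [Adjunction.homEquiv_unit, Monad.adj_unit] at this
  exact this

theorem transpose_injective : Function.Injective (transpose T : (X ⟶ Y.A) → (T.free.obj X ⟶ Y)) :=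
  ((Monad.adj T).homEquiv X Y).symm.injective

theorem transpose_comp {Y' : T.Algebra} (f : X ⟶ Y.A) (h : Y ⟶ Y') :
    transpose T (f ≫ h.f) = transpose T f ≫ h :=
  (Monad.adj T).homEquiv_naturality_right_symm f h

theorem isReflexivePair_transpose {q₁ q₂ : X ⟶ Y.A} (hq : IsReflexivePair q₁ q₂) :
    IsReflexivePair (transpose T q₁).f (transpose T q₂).f := by
  obtain ⟨d, hd₁, hd₂⟩ := hq.common_section
  refine IsReflexivePair.mk' (d ≫ T.η.app X) ?_ ?_
  · exact (Category.assoc _ _ _).trans ((d ≫= unit_comp_transpose_f q₁).trans hd₁)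
  · exact (Category.assoc _ _ _).trans ((d ≫= unit_comp_transpose_f q₂).trans hd₂)

end Transpose

theorem _root_.CategoryTheory.IsReflexivePair.map {D : Type*} [Category D] (F : C ⥤ D)
    {A B : C} {f g : A ⟶ B} (h : IsReflexivePair f g) : IsReflexivePair (F.map f) (F.map g) := by
  obtain ⟨s, hf, hg⟩ := h.common_section
  exact IsReflexivePair.mk' (F.map s) (by rw [← F.map_comp, hf, F.map_id])
    (by rw [← F.map_comp, hg, F.map_id])

section CoequalizerAlgebra

variable {X Y : T.Algebra} {f g : X ⟶ Y} {Z : C} {c : Y.A ⟶ Z} (w : f.f ≫ c = g.f ≫ c)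
  {w' : T.map f.f ≫ T.map c = T.map g.f ≫ T.map c} (hTc : IsColimit (Cofork.ofπ (T.map c) w'))

noncomputable def coequalizerStructureMap : T.obj Z ⟶ Z :=
  Cofork.IsColimit.desc hTc (Y.a ≫ c) (by rw [f.h_assoc, g.h_assoc, w])

theorem map_comp_coequalizerStructureMap : T.map c ≫ coequalizerStructureMap w hTc = Y.a ≫ c :=
  Cofork.IsColimit.π_desc' hTc _ _

noncomputable def coequalizerAlgebra [Epi c] [Epi (T.map (T.map c))] : T.Algebra where
  A := Z
  a := coequalizerStructureMap w hTc
  unit := by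
    rw [← cancel_epi c, T.unit_naturality_assoc, map_comp_coequalizerStructureMap,
      Y.unit_assoc, Category.comp_id]
  assoc := by
    rw [← cancel_epi (T.map (T.map c)), T.mu_naturality_assoc, map_comp_coequalizerStructureMap,
      Y.assoc_assoc, ← T.map_comp_assoc, map_comp_coequalizerStructureMap, T.map_comp_assoc,
      map_comp_coequalizerStructureMap]

noncomputable def toCoequalizerAlgebra [Epi c] [Epi (T.map (T.map c))] :
    Y ⟶ coequalizerAlgebra w hTc where
  f := c
  h := map_comp_coequalizerStructureMap w hTc

end CoequalizerAlgebra

theorem PreservesReflexiveCoequalizersProp.epi_map_map {S : C ⥤ C}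
    (hS : PreservesReflexiveCoequalizersProp S) {A B X : C} {f g : A ⟶ B} {c : B ⟶ X}
    (w : f ≫ c = g ≫ c) (hfg : IsReflexivePair f g) (hc : IsColimit (Cofork.ofπ c w)) :
    Epi (S.map (S.map c)) := by
  obtain ⟨hSc⟩ := hS f g c w hfg ⟨hc⟩
  obtain ⟨hSSc⟩ := hS _ _ _ _ (hfg.map S) ⟨hSc⟩
  exact epi_of_isColimit_cofork hSSc

theorem IsTAutHom.rch_comp {A B : TAut T I O} {h : A.Q.A ⟶ B.Q.A} (hh : IsTAutHom A B h) :
    A.rch ≫ h = B.rch := by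
  rw [TAut.rch, TAut.rch, ← hh.hi]
  exact (congrArg Monad.Algebra.Hom.f (transpose_comp A.i ⟨h, hh.alg⟩)).symm

theorem TAut.map_rch_comp (A : TAut T I O) : T.map A.rch ≫ A.Q.a = T.μ.app I ≫ A.rch :=
  (transpose T A.i).h

theorem TAut.map_comp_mu_comp_lang_eq (A : TAut T I O) {K : C} {p₁ p₂ : K ⟶ T.obj I}
    (hp : p₁ ≫ A.rch = p₂ ≫ A.rch) :
    T.map p₁ ≫ T.μ.app I ≫ A.lang = T.map p₂ ≫ T.μ.app I ≫ A.lang := by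
  have hμ (p : K ⟶ T.obj I) :
      T.map p ≫ T.μ.app I ≫ A.lang = T.map (p ≫ A.rch) ≫ A.Q.a ≫ A.o := by
    rw [TAut.lang, ← Category.assoc (T.μ.app I), ← A.map_rch_comp, T.map_comp]
    simp only [Category.assoc]
  rw [hμ, hμ, hp]

theorem exists_reachable_comp_transpose_eq [HasReflexiveCoequalizers C]
    (hT : PreservesReflexiveCoequalizersProp (T : C ⥤ C)) (L : T.obj I ⟶ O) {F : T.Algebra}
    (r₁ r₂ : F ⟶ T.free.obj I) (hr : IsReflexivePair r₁.f r₂.f) (hL : r₁.f ≫ L = r₂.f ≫ L) :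
    ∃ B : TAut T I O, B.Reachable ∧ B.lang = L ∧ r₁ ≫ transpose T B.i = r₂ ≫ transpose T B.i := by
  have hcoeq := coequalizerIsCoequalizer r₁.f r₂.f
  have := hT.epi_map_map _ hr hcoeq
  let c := toCoequalizerAlgebra (coequalizer.condition r₁.f r₂.f) (hT _ _ _ _ hr ⟨hcoeq⟩).some
  let B : TAut T I O := ⟨_, T.η.app I ≫ c.f, coequalizer.desc (f := r₁.f) (g := r₂.f) L hL⟩
  have hBc : transpose T B.i = c := transpose_unit_comp c
  have hBrch : B.rch = c.f := congrArg (·.f) hBc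
  refine ⟨B, ⟨_, r₁.f, r₂.f, hr, hBrch ▸ ⟨coequalizer.condition r₁.f r₂.f, ⟨hcoeq⟩⟩⟩, ?_, ?_⟩
  · exact (congrArg (·.f ≫ B.o) hBc).trans (coequalizer.π_desc (f := r₁.f) (g := r₂.f) L hL)
  · rw [hBc]
    exact Monad.Algebra.Hom.ext (coequalizer.condition r₁.f r₂.f)

theorem TAut.Minimal.comp_rch_eq [HasReflexiveCoequalizers C]
    (hT : PreservesReflexiveCoequalizersProp (T : C ⥤ C)) {A : TAut T I O} (hA : A.Minimal)
    {S : C} {q₁ q₂ : S ⟶ T.obj I} (hq : IsReflexivePair q₁ q₂)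
    (hLq : T.map q₁ ≫ T.μ.app I ≫ A.lang = T.map q₂ ≫ T.μ.app I ≫ A.lang) :
    q₁ ≫ A.rch = q₂ ≫ A.rch := by
  have hL : (transpose T (Y := T.free.obj I) q₁).f ≫ A.lang =
      (transpose T (Y := T.free.obj I) q₂).f ≫ A.lang := by
    rw [transpose_free_f, transpose_free_f]
    exact (Category.assoc _ _ _).trans (hLq.trans (Category.assoc _ _ _).symm)
  obtain ⟨B, hB, hBL, hBq⟩ :=
    exists_reachable_comp_transpose_eq hT A.lang _ _ (isReflexivePair_transpose hq) hL
  obtain ⟨h, hh, -⟩ := hA.2 B hB hBL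
  -- `q₁ : S ⟶ T.obj I` is not reducibly a morphism into `(T.free.obj I).A`, so `rw` cannot act
  -- inside `transpose T q₁`; this step is done in term mode.
  have hBrch : q₁ ≫ B.rch = q₂ ≫ B.rch := transpose_injective <|
    (transpose_comp (Y := T.free.obj I) q₁ _).trans
      (hBq.trans (transpose_comp (Y := T.free.obj I) q₂ _).symm)
  rw [← hh.rch_comp, reassoc_of% hBrch]

theorem TAut.Minimal.isNerode_of_isKernelPair [HasReflexiveCoequalizers C]
    (hT : PreservesReflexiveCoequalizersProp (T : C ⥤ C)) {A : TAut T I O} (hA : A.Minimal)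
    {K : C} {p₁ p₂ : K ⟶ T.obj I} (hK : IsKernelPair A.rch p₁ p₂) :
    IsNerode T A.lang K p₁ p₂ := by
  refine ⟨A.map_comp_mu_comp_lang_eq hK.w, fun S q₁ q₂ hq hLq => ?_⟩
  have hqA := hA.comp_rch_eq hT hq hLq
  exact ⟨hK.lift q₁ q₂ hqA, ⟨hK.lift_fst _ _ _, hK.lift_snd _ _ _⟩,
    fun u ⟨hu₁, hu₂⟩ => hK.hom_ext (by rw [hu₁, hK.lift_fst]) (by rw [hu₂, hK.lift_snd])⟩

/-- If `C` has kernel pairs and reflexive coequalisers and `T`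
preserves reflexive coequalisers, then every language accepted by a minimal
`T`-automaton has a Nerode equivalence; indeed, the kernel pair of the reachability
map of the minimal automaton is the Nerode equivalence. -/
theorem nerode_exists_of_minimal
    {C : Type u} [Category.{v} C] [HasReflexiveCoequalizers C]
    (hkp : ∀ {X Y : C} (f : X ⟶ Y), HasPullback f f)
    (T : Monad C) (hT : PreservesReflexiveCoequalizersProp (T : C ⥤ C))
    {I O : C} (L : (T : C ⥤ C).obj I ⟶ O)
    (A : TAut T I O) (hA : A.Minimal) (hL : A.lang = L) :
    (∀ (K : C) (p₁ p₂ : K ⟶ (T : C ⥤ C).obj I),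
      IsKernelPair A.rch p₁ p₂ → IsNerode T L K p₁ p₂) ∧
    (∃ (K : C) (p₁ p₂ : K ⟶ (T : C ⥤ C).obj I),
      IsKernelPair A.rch p₁ p₂ ∧ IsNerode T L K p₁ p₂) := by
  subst hL
  have := hkp A.rch
  have hpb : IsKernelPair A.rch _ _ := IsPullback.of_hasPullback A.rch A.rch
  exact ⟨fun _ _ _ hK => hA.isNerode_of_isKernelPair hT hK,
    _, _, _, hpb, hA.isNerode_of_isKernelPair hT hpb⟩

end TreeAutPaper
end
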